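/- arXiv:2110.11291 — 3 statements merged into one kernel-verified Lean document; each statement's English description precedes it below -/
import Mathlib

section
/- Let ε > 0 and let Ψ, Ψ̂ : ℝ × ℝⁿ → ℝ be C^{1,2} with Ψ > 0. Suppose ∂Ψ/∂t = −ε·ΔₓΨ (backward heat equation) and ∂Ψ̂/∂t = ε·ΔₓΨ̂ (heat equation). Then p := Ψ·Ψ̂ satisfies the Fokker–Planck equation ∂p/∂t = −∇ₓ·(p · 2ε ∇ₓ(log Ψ)) + ε·Δₓp. -/
/-!
With `∇ log Ψ = ∇Ψ / Ψ` the drift term is `2ε Ψ̂ ∇Ψ`, so the right-hand side only involves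
`div (Ψ̂ ∇Ψ) = Ψ̂ ΔΨ + ⟪∇Ψ̂, ∇Ψ⟫` and the product rule `Δ(ΨΨ̂) = Ψ ΔΨ̂ + Ψ̂ ΔΨ + 2 ⟪∇Ψ, ∇Ψ̂⟫`.
The cross terms cancel and what remains, `ε (Ψ ΔΨ̂ − Ψ̂ ΔΨ)`, is `∂ₜ(ΨΨ̂)` by the two heat equations.
-/

open scoped BigOperators RealInnerProductSpace

/-- Divergence of a vector field on `ℝⁿ`: `∇·F = Σᵢ ∂Fᵢ/∂xᵢ`. -/
noncomputable def diverg {n : ℕ} (F : EuclideanSpace ℝ (Fin n) → EuclideanSpace ℝ (Fin n))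
    (x : EuclideanSpace ℝ (Fin n)) : ℝ :=
  ∑ i, fderiv ℝ F x (EuclideanSpace.single i 1) i

/-- Laplacian `Δf = ∇·∇f`. -/
noncomputable def lap {n : ℕ} (f : EuclideanSpace ℝ (Fin n) → ℝ)
    (x : EuclideanSpace ℝ (Fin n)) : ℝ :=
  diverg (fun y => gradient f y) x

section Gradient

variable {F : Type*} [NormedAddCommGroup F] [InnerProductSpace ℝ F] [CompleteSpace F]
  {f g : F → ℝ} {f' g' x : F}

theorem HasGradientAt.mul (hf : HasGradientAt f f' x) (hg : HasGradientAt g g' x) :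
    HasGradientAt (fun y => f y * g y) (f x • g' + g x • f') x := by
  rw [hasGradientAt_iff_hasFDerivAt] at *
  refine (hf.mul hg).congr_fderiv ?_
  ext v
  simp

theorem HasGradientAt.log (hf : HasGradientAt f f' x) (hx : f x ≠ 0) :
    HasGradientAt (fun y => Real.log (f y)) ((f x)⁻¹ • f') x := by
  rw [hasGradientAt_iff_hasFDerivAt] at *
  refine (hf.log hx).congr_fderiv ?_
  ext v
  simp

theorem ContDiff.differentiable_gradient (hf : ContDiff ℝ 2 f) :
    Differentiable ℝ (gradient f) :=
  (InnerProductSpace.toDual ℝ F).symm.differentiable.comp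
    ((hf.fderiv_right le_rfl).differentiable one_ne_zero)

end Gradient

variable {n : ℕ} {F G : EuclideanSpace ℝ (Fin n) → EuclideanSpace ℝ (Fin n)}
  {c : EuclideanSpace ℝ (Fin n) → ℝ} {x : EuclideanSpace ℝ (Fin n)}

theorem diverg_add (hF : DifferentiableAt ℝ F x) (hG : DifferentiableAt ℝ G x) :
    diverg (fun y => F y + G y) x = diverg F x + diverg G x := by
  simp only [diverg, fderiv_fun_add hF hG, add_apply, PiLp.add_apply,
    Finset.sum_add_distrib]

theorem diverg_const_smul (a : ℝ) : diverg (fun y => a • F y) x = a * diverg F x := by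
  simp [diverg, ← Pi.smul_def, fderiv_const_smul_field, Finset.mul_sum]

theorem ContinuousLinearMap.apply_eq_sum_single (L : EuclideanSpace ℝ (Fin n) →L[ℝ] ℝ)
    (v : EuclideanSpace ℝ (Fin n)) : L v = ∑ i, L (EuclideanSpace.single i 1) * v i := by
  conv_lhs => rw [← (EuclideanSpace.basisFun (Fin n) ℝ).sum_repr v]
  simp [mul_comm]

theorem diverg_smul (hc : DifferentiableAt ℝ c x) (hF : DifferentiableAt ℝ F x) :
    diverg (fun y => c y • F y) x = c x * diverg F x + ⟪gradient c x, F x⟫ := by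
  simp [diverg, fderiv_fun_smul hc hF, Finset.sum_add_distrib, Finset.mul_sum,
    (fderiv ℝ c x).apply_eq_sum_single (F x)]

theorem lap_mul {f g : EuclideanSpace ℝ (Fin n) → ℝ} (hf : Differentiable ℝ f)
    (hg : Differentiable ℝ g) (hf' : DifferentiableAt ℝ (gradient f) x)
    (hg' : DifferentiableAt ℝ (gradient g) x) :
    lap (fun y => f y * g y) x
      = f x * lap g x + g x * lap f x + 2 * ⟪gradient f x, gradient g x⟫ := by
  have hgrad : gradient (fun y => f y * g y) = fun y => f y • gradient g y + g y • gradient f y :=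
    funext fun y => ((hf y).hasGradientAt.mul (hg y).hasGradientAt).gradient
  rw [lap, hgrad]
  beta_reduce
  rw [diverg_add (F := fun y => f y • gradient g y) (G := fun y => g y • gradient f y)
      ((hf x).smul hg') ((hg x).smul hf'), diverg_smul (hf x) hg',
    diverg_smul (hg x) hf', real_inner_comm, lap, lap]
  ring

theorem stmt_6_general {n : ℕ} (Ψ Ψhat : ℝ → EuclideanSpace ℝ (Fin n) → ℝ) (ε : ℝ)
    (hΨ : ContDiff ℝ 2 (fun q : ℝ × EuclideanSpace ℝ (Fin n) => Ψ q.1 q.2))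
    (hΨhat : ContDiff ℝ 2 (fun q : ℝ × EuclideanSpace ℝ (Fin n) => Ψhat q.1 q.2))
    (hpos : ∀ t x, 0 < Ψ t x)
    (heatB : ∀ t x, deriv (fun τ => Ψ τ x) t = -ε * lap (Ψ t) x)
    (heatF : ∀ t x, deriv (fun τ => Ψhat τ x) t = ε * lap (Ψhat t) x) :
    ∀ t x,
      deriv (fun τ => Ψ τ x * Ψhat τ x) t
        = - diverg (fun y =>
              (Ψ t y * Ψhat t y) • ((2 * ε) • gradient (fun z => Real.log (Ψ t z)) y)) x
          + ε * lap (fun y => Ψ t y * Ψhat t y) x := by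
  intro t x
  have hΨt : ContDiff ℝ 2 (Ψ t) := hΨ.comp (contDiff_const.prodMk contDiff_id)
  have hΨhatt : ContDiff ℝ 2 (Ψhat t) := hΨhat.comp (contDiff_const.prodMk contDiff_id)
  have hΨx : ContDiff ℝ 2 (fun τ => Ψ τ x) := hΨ.comp (contDiff_id.prodMk contDiff_const)
  have hΨhatx : ContDiff ℝ 2 (fun τ => Ψhat τ x) :=
    hΨhat.comp (contDiff_id.prodMk contDiff_const)
  have hdrift : (fun y =>
        (Ψ t y * Ψhat t y) • ((2 * ε) • gradient (fun z => Real.log (Ψ t z)) y))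
      = fun y => (2 * ε) • (Ψhat t y • gradient (Ψ t) y) := by
    funext y
    have hlog := ((hΨt.differentiable two_ne_zero y).hasGradientAt.log (hpos t y).ne').gradient
    rw [hlog, smul_smul, smul_smul, smul_smul]
    congr 1
    field_simp [(hpos t y).ne']
  rw [deriv_fun_mul (hΨx.differentiable two_ne_zero t) (hΨhatx.differentiable two_ne_zero t),
    heatB, heatF, hdrift, diverg_const_smul,
    diverg_smul (hΨhatt.differentiable two_ne_zero x) (hΨt.differentiable_gradient x),
    lap_mul (hΨt.differentiable two_ne_zero) (hΨhatt.differentiable two_ne_zero)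
      (hΨt.differentiable_gradient x) (hΨhatt.differentiable_gradient x), real_inner_comm]
  unfold lap
  ring

/-- factorization principle, classical SB: if `Ψ > 0` solves
`∂Ψ/∂t = −ε ΔₓΨ` and `Ψ̂` solves `∂Ψ̂/∂t = ε ΔₓΨ̂`, then `p := Ψ·Ψ̂` solves the
Fokker–Planck equation `∂p/∂t = −∇ₓ·(p · 2ε∇ₓ log Ψ) + ε Δₓp`. -/
theorem stmt_6 {n : ℕ} (Ψ Ψhat : ℝ → EuclideanSpace ℝ (Fin n) → ℝ) (ε : ℝ) (hε : 0 < ε)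
    (hΨ : ContDiff ℝ 2 (fun q : ℝ × EuclideanSpace ℝ (Fin n) => Ψ q.1 q.2))
    (hΨhat : ContDiff ℝ 2 (fun q : ℝ × EuclideanSpace ℝ (Fin n) => Ψhat q.1 q.2))
    (hpos : ∀ t x, 0 < Ψ t x)
    (heatB : ∀ t x, deriv (fun τ => Ψ τ x) t = -ε * lap (Ψ t) x)
    (heatF : ∀ t x, deriv (fun τ => Ψhat τ x) t = ε * lap (Ψhat t) x) :
    ∀ t x,
      deriv (fun τ => Ψ τ x * Ψhat τ x) t
        = - diverg (fun y =>
              (Ψ t y * Ψhat t y) • ((2 * ε) • gradient (fun z => Real.log (Ψ t z)) y)) x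
          + ε * lap (fun y => Ψ t y * Ψhat t y) x :=
  stmt_6_general Ψ Ψhat ε hΨ hΨhat hpos heatB heatF
end

section
/- Score-matching integral identity: let p be a smooth strictly positive probability density on ℝⁿ, s : ℝⁿ → ℝⁿ a smooth compactly supported vector field, and g ∈ ℝ. Then ∫ ((g²/2)‖s(x)‖² + g² (∇·s)(x)) p(x) dx = ∫ ((g²/2)‖s(x) − ∇log p(x)‖² − (g²/2)‖∇log p(x)‖²) p(x) dx. -/
/-!
Expanding the square gives `‖s - ∇log p‖² - ‖∇log p‖² = ‖s‖² - 2⟪s, ∇p⟫ / p`, so after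
multiplying by `p` the identity reduces to `∫ (∇·s) p = -∫ Dp(s)`. This is integration by parts
in each coordinate, with no boundary terms because `s` has compact support.
-/

open scoped BigOperators RealInnerProductSpace

open MeasureTheory

theorem inner_gradient_log_mul_self {F : Type*} [NormedAddCommGroup F] [InnerProductSpace ℝ F]
    [CompleteSpace F] {p : F → ℝ} {x : F} (hp : DifferentiableAt ℝ p x) (hx : p x ≠ 0) (v : F) :
    ⟪v, gradient (fun y => Real.log (p y)) x⟫ * p x = fderiv ℝ p x v := by
  rw [real_inner_comm, inner_gradient_left, (hp.hasFDerivAt.log hx).fderiv,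
    smul_apply, smul_eq_mul, mul_comm, ← mul_assoc, mul_inv_cancel₀ hx, one_mul]

section Divergence

variable {n : ℕ}

theorem StrongDual.apply_eq_sum_mul_apply_single (L : StrongDual ℝ (EuclideanSpace ℝ (Fin n)))
    (v : EuclideanSpace ℝ (Fin n)) : L v = ∑ i, v i * L (EuclideanSpace.single i 1) := by
  conv_lhs => rw [← (EuclideanSpace.basisFun (Fin n) ℝ).sum_repr v]
  simp [map_sum]

theorem continuous_diverg {F : EuclideanSpace ℝ (Fin n) → EuclideanSpace ℝ (Fin n)}
    (hF : ContDiff ℝ 1 F) : Continuous (diverg F) :=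
  continuous_finsetSum _ fun i _ => (PiLp.continuous_apply 2 _ i).comp
    ((hF.continuous_fderiv one_ne_zero).clm_apply continuous_const)

theorem HasCompactSupport.diverg {F : EuclideanSpace ℝ (Fin n) → EuclideanSpace ℝ (Fin n)}
    (hF : HasCompactSupport F) : HasCompactSupport (_root_.diverg F) :=
  (hF.fderiv (𝕜 := ℝ)).mono fun x hx h0 => hx (by simp [_root_.diverg, h0])

end Divergence

theorem integrable_apply_mul_of_hasCompactSupport {X ι : Type*} [TopologicalSpace X]
    [MeasurableSpace X] [OpensMeasurableSpace X] {μ : Measure X} [IsFiniteMeasureOnCompacts μ]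
    {G : X → EuclideanSpace ℝ ι} (hG : Continuous G) (hGs : HasCompactSupport G) {q : X → ℝ}
    (hq : Continuous q) (i : ι) : Integrable (fun x => G x i * q x) μ :=
  ((PiLp.continuous_apply 2 _ i).comp hG |>.mul hq).integrable_of_hasCompactSupport
    (hGs.mono fun x hx h0 => hx (by simp [h0])).mul_right

section IntegrationByParts

variable {n : ℕ} {F : EuclideanSpace ℝ (Fin n) → EuclideanSpace ℝ (Fin n)}
  {p : EuclideanSpace ℝ (Fin n) → ℝ}

theorem integral_fderiv_apply_single_mul_eq_neg (hF : ContDiff ℝ 1 F) (hFs : HasCompactSupport F)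
    (hp : ContDiff ℝ 1 p) (i : Fin n) :
    ∫ x, fderiv ℝ F x (EuclideanSpace.single i 1) i * p x
      = -∫ x, F x i * fderiv ℝ p x (EuclideanSpace.single i 1) := by
  set e := EuclideanSpace.single (𝕜 := ℝ) i 1
  have hFd := hF.differentiable one_ne_zero
  have hF'i : ∀ x, fderiv ℝ (fun y => F y i) x e = fderiv ℝ F x e i := fun x =>
    congrArg (· e) ((EuclideanSpace.proj (𝕜 := ℝ) i).hasFDerivAt.comp x (hFd x).hasFDerivAt).fderiv
  have hF'e : HasCompactSupport fun x => fderiv ℝ F x e :=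
    (hFs.fderiv (𝕜 := ℝ)).mono fun x hx h0 => hx (by simp [h0])
  have h := integral_mul_fderiv_eq_neg_fderiv_mul_of_integrable (μ := volume)
    (f := fun x => F x i) (g := p) (v := e)
    (by
      simpa only [hF'i] using integrable_apply_mul_of_hasCompactSupport
        ((hF.continuous_fderiv one_ne_zero).clm_apply continuous_const) hF'e hp.continuous i)
    (integrable_apply_mul_of_hasCompactSupport hF.continuous hFs
      ((hp.continuous_fderiv one_ne_zero).clm_apply continuous_const) i)
    (integrable_apply_mul_of_hasCompactSupport hF.continuous hFs hp.continuous i)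
    (fun x _ => differentiableAt_euclidean.mp (hFd x) i)
    (fun x _ => hp.differentiable one_ne_zero x)
  simp only [hF'i] at h
  rw [h, neg_neg]

theorem integral_diverg_mul_eq_neg_integral_fderiv_apply (hF : ContDiff ℝ 1 F)
    (hFs : HasCompactSupport F) (hp : ContDiff ℝ 1 p) :
    ∫ x, diverg F x * p x = -∫ x, fderiv ℝ p x (F x) := by
  have hF'e (i : Fin n) : HasCompactSupport fun x => fderiv ℝ F x (EuclideanSpace.single i 1) :=
    (hFs.fderiv (𝕜 := ℝ)).mono fun x hx h0 => hx (by simp [h0])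
  calc ∫ x, diverg F x * p x
      = ∑ i, ∫ x, fderiv ℝ F x (EuclideanSpace.single i 1) i * p x := by
        simp only [diverg, Finset.sum_mul]
        exact integral_finsetSum _ fun i _ => integrable_apply_mul_of_hasCompactSupport
          ((hF.continuous_fderiv one_ne_zero).clm_apply continuous_const) (hF'e i) hp.continuous i
    _ = -∑ i, ∫ x, F x i * fderiv ℝ p x (EuclideanSpace.single i 1) := by
        simp only [integral_fderiv_apply_single_mul_eq_neg hF hFs hp, Finset.sum_neg_distrib]
    _ = -∫ x, fderiv ℝ p x (F x) := by
        simp only [StrongDual.apply_eq_sum_mul_apply_single (fderiv ℝ p _) (F _)]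
        rw [integral_finsetSum _ fun i _ => integrable_apply_mul_of_hasCompactSupport hF.continuous
          hFs ((hp.continuous_fderiv one_ne_zero).clm_apply continuous_const) i]

end IntegrationByParts

theorem stmt_10_general {n : ℕ} (p : EuclideanSpace ℝ (Fin n) → ℝ)
    (s : EuclideanSpace ℝ (Fin n) → EuclideanSpace ℝ (Fin n)) (g : ℝ)
    (hp : ContDiff ℝ 1 p) (hppos : ∀ x, 0 < p x)
    (hs : ContDiff ℝ 1 s) (hssupp : HasCompactSupport s) :
    ∫ x, (g ^ 2 / 2 * ‖s x‖ ^ 2 + g ^ 2 * diverg s x) * p x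
      = ∫ x, (g ^ 2 / 2 * ‖s x - gradient (fun y => Real.log (p y)) x‖ ^ 2
          - g ^ 2 / 2 * ‖gradient (fun y => Real.log (p y)) x‖ ^ 2) * p x := by
  have hscore (x) : (g ^ 2 / 2 * ‖s x - gradient (fun y => Real.log (p y)) x‖ ^ 2
      - g ^ 2 / 2 * ‖gradient (fun y => Real.log (p y)) x‖ ^ 2) * p x
      = g ^ 2 / 2 * ‖s x‖ ^ 2 * p x - g ^ 2 * fderiv ℝ p x (s x) := by
    rw [norm_sub_sq_real, ← inner_gradient_log_mul_self (hp.differentiable one_ne_zero x)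
      (hppos x).ne' (s x)]
    ring
  have hint_sq : Integrable fun x => g ^ 2 / 2 * ‖s x‖ ^ 2 * p x :=
    (by fun_prop : Continuous _).integrable_of_hasCompactSupport
      (hssupp.mono fun x hx h0 => hx (by simp [h0]))
  have hint_div : Integrable fun x => diverg s x * p x :=
    ((continuous_diverg hs).mul hp.continuous).integrable_of_hasCompactSupport
      hssupp.diverg.mul_right
  have hint_fderiv : Integrable fun x => fderiv ℝ p x (s x) :=
    ((hp.continuous_fderiv one_ne_zero).clm_apply hs.continuous).integrable_of_hasCompactSupport
      (hssupp.mono fun x hx h0 => hx (by simp [h0]))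
  calc ∫ x, (g ^ 2 / 2 * ‖s x‖ ^ 2 + g ^ 2 * diverg s x) * p x
      = (∫ x, g ^ 2 / 2 * ‖s x‖ ^ 2 * p x) + g ^ 2 * ∫ x, diverg s x * p x := by
        rw [← integral_const_mul, ← integral_add hint_sq (hint_div.const_mul _)]
        congr 1 with x
        ring
    _ = (∫ x, g ^ 2 / 2 * ‖s x‖ ^ 2 * p x) - g ^ 2 * ∫ x, fderiv ℝ p x (s x) := by
        rw [integral_diverg_mul_eq_neg_integral_fderiv_apply hs hssupp hp]
        ring
    _ = _ := by
        rw [← integral_const_mul, ← integral_sub hint_sq (hint_fderiv.const_mul _)]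
        simp only [hscore]

/-- score-matching integral identity:
`∫ ((g²/2)‖s‖² + g²(∇·s)) p = ∫ ((g²/2)‖s − ∇log p‖² − (g²/2)‖∇log p‖²) p`. -/
theorem stmt_10 {n : ℕ} (p : EuclideanSpace ℝ (Fin n) → ℝ)
    (s : EuclideanSpace ℝ (Fin n) → EuclideanSpace ℝ (Fin n)) (g : ℝ)
    (hp : ContDiff ℝ 1 p) (hppos : ∀ x, 0 < p x) (hpint : Integrable p)
    (hpnorm : ∫ x, p x = 1)
    (hs : ContDiff ℝ 1 s) (hssupp : HasCompactSupport s) :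
    ∫ x, (g ^ 2 / 2 * ‖s x‖ ^ 2 + g ^ 2 * diverg s x) * p x
      = ∫ x, (g ^ 2 / 2 * ‖s x - gradient (fun y => Real.log (p y)) x‖ ^ 2
          - g ^ 2 / 2 * ‖gradient (fun y => Real.log (p y)) x‖ ^ 2) * p x :=
  stmt_10_general p s g hp hppos hs hssupp
end

section
/- Instantaneous change of variables: let F : ℝ × ℝⁿ → ℝⁿ be a C¹ vector field, let p : ℝ × ℝⁿ → ℝ be C¹, strictly positive, and satisfy the continuity equation ∂p/∂t + ∇ₓ·(p F) = 0. Let X : [0,T] → ℝⁿ be a C¹ solution of the ODE dX/dt = F(t, X(t)). Then for all t ∈ [0,T], (d/dt) log p(t, X(t)) = −(∇ₓ·F)(t, X(t)). -/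
open scoped BigOperators RealInnerProductSpace

/-!
Along a trajectory of `F`, the chain rule gives `d/dt p(t, X t) = ∂ₜp + ∇ₓp · F`, while the
product rule turns the continuity equation into `∂ₜp = -(p ∇ₓ·F + ∇ₓp · F)`. Hence
`d/dt p(t, X t) = -p ∇ₓ·F`, and dividing by `p > 0` gives the derivative of `log p(t, X t)`.
-/

section Slices

variable {𝕜 : Type*} [NontriviallyNormedField 𝕜]
  {E E' G : Type*} [NormedAddCommGroup E] [NormedSpace 𝕜 E] [NormedAddCommGroup E']
  [NormedSpace 𝕜 E'] [NormedAddCommGroup G] [NormedSpace 𝕜 G]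

lemma DifferentiableAt.of_uncurry_right {f : E' → E → G} {t : E'} {x : E}
    (hf : DifferentiableAt 𝕜 (fun q : E' × E => f q.1 q.2) (t, x)) :
    DifferentiableAt 𝕜 (f t) x :=
  hf.comp x ((differentiableAt_const t).prodMk differentiableAt_id)

lemma hasDerivAt_uncurry_comp_prodMk {f : 𝕜 → E → G} {X : 𝕜 → E} {t : 𝕜} {v : E}
    (hf : DifferentiableAt 𝕜 (fun q : 𝕜 × E => f q.1 q.2) (t, X t)) (hX : HasDerivAt X v t) :
    HasDerivAt (fun τ => f τ (X τ))
      (deriv (fun τ => f τ (X t)) t + fderiv 𝕜 (f t) (X t) v) t := by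
  set L := fderiv 𝕜 (fun q : 𝕜 × E => f q.1 q.2) (t, X t)
  have hL : HasFDerivAt (fun q : 𝕜 × E => f q.1 q.2) L (t, X t) := hf.hasFDerivAt
  have h_time : HasDerivAt (fun τ => f τ (X t)) (L (1, 0)) t :=
    hL.comp_hasDerivAt (l := fun q : 𝕜 × E => f q.1 q.2) t
      ((hasDerivAt_id t).prodMk (hasDerivAt_const t (X t)))
  have h_space : fderiv 𝕜 (f t) (X t) = L.comp (ContinuousLinearMap.inr 𝕜 𝕜 E) :=
    (hL.comp (X t) (hasFDerivAt_prodMk_right t (X t))).fderiv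
  have h_split : L (1, v) = L (1, 0) + L (0, v) := by
    rw [← map_add, Prod.mk_add_mk, add_zero, zero_add]
  rw [h_time.deriv, h_space, ContinuousLinearMap.comp_apply, ContinuousLinearMap.inr_apply,
    ← h_split]
  exact hL.comp_hasDerivAt (l := fun q : 𝕜 × E => f q.1 q.2) t ((hasDerivAt_id t).prodMk hX)

end Slices

section Divergence

variable {n : ℕ}

lemma ContinuousLinearMap.sum_apply_single_mul (C : EuclideanSpace ℝ (Fin n) →L[ℝ] ℝ)
    (v : EuclideanSpace ℝ (Fin n)) :
    ∑ i, C (EuclideanSpace.single i 1) * v i = C v := by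
  conv_rhs => rw [← (EuclideanSpace.basisFun (Fin n) ℝ).toBasis.sum_repr v]
  simp [map_sum, mul_comm]

lemma diverg_smul_s11 {f : EuclideanSpace ℝ (Fin n) → ℝ}
    {G : EuclideanSpace ℝ (Fin n) → EuclideanSpace ℝ (Fin n)} {x : EuclideanSpace ℝ (Fin n)}
    (hf : DifferentiableAt ℝ f x) (hG : DifferentiableAt ℝ G x) :
    diverg (fun y => f y • G y) x = f x * diverg G x + fderiv ℝ f x (G x) := by
  have h_prod : HasFDerivAt (fun y => f y • G y)
      (f x • fderiv ℝ G x + (fderiv ℝ f x).smulRight (G x)) x :=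
    hf.hasFDerivAt.smul hG.hasFDerivAt
  rw [diverg, diverg, h_prod.fderiv, Finset.mul_sum,
    ← (fderiv ℝ f x).sum_apply_single_mul (G x), ← Finset.sum_add_distrib]
  simp [mul_comm]

end Divergence

/-- instantaneous change of variables: if `p > 0` solves the
continuity equation `∂p/∂t + ∇ₓ·(pF) = 0` and `X` solves `dX/dt = F(t, X(t))`,
then `(d/dt) log p(t, X(t)) = −(∇ₓ·F)(t, X(t))` on `[0, T]`. -/
theorem stmt_11 {n : ℕ} (T : ℝ)
    (F : ℝ → EuclideanSpace ℝ (Fin n) → EuclideanSpace ℝ (Fin n))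
    (p : ℝ → EuclideanSpace ℝ (Fin n) → ℝ)
    (X : ℝ → EuclideanSpace ℝ (Fin n))
    (hF : ContDiff ℝ 1 (fun q : ℝ × EuclideanSpace ℝ (Fin n) => F q.1 q.2))
    (hp : ContDiff ℝ 1 (fun q : ℝ × EuclideanSpace ℝ (Fin n) => p q.1 q.2))
    (hppos : ∀ t x, 0 < p t x)
    (hcont : ∀ t x, deriv (fun τ => p τ x) t + diverg (fun y => p t y • F t y) x = 0)
    (hX : ∀ t ∈ Set.Icc (0 : ℝ) T, HasDerivAt X (F t (X t)) t) :
    ∀ t ∈ Set.Icc (0 : ℝ) T,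
      deriv (fun τ => Real.log (p τ (X τ))) t = - diverg (F t) (X t) := by
  intro t ht
  have hp_diff := hp.differentiable one_ne_zero (t, X t)
  have h_along := hasDerivAt_uncurry_comp_prodMk hp_diff (hX t ht)
  have h_cont := hcont t (X t)
  rw [diverg_smul_s11 hp_diff.of_uncurry_right
    (hF.differentiable one_ne_zero (t, X t)).of_uncurry_right] at h_cont
  rw [(h_along.log (hppos t (X t)).ne').deriv, div_eq_iff (hppos t (X t)).ne']
  linarith
end
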